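/- Let n be a positive integer, let X and Y be real symmetric n×n matrices with Y positive definite, and for j = 1,…,n let K_j be the n×2 complex matrix K_j = Y^{-1/2}[−(X+iY), Iₙ]·Pₙ·E_j, where E_j is the 2n×2 matrix whose rows are all zero except that rows 2j−1 and 2j form the 2×2 identity, and Pₙ is the permutation matrix with Pₙ(a₁,…,a_{2n})ᵀ = (a₁, a₃, …, a_{2n−1}, a₂, a₄, …, a_{2n})ᵀ. Then for all j ≠ k, the entrywise imaginary part of K_j† K_k is the 2×2 zero matrix. -/

import Mathlib

/-!
STATEMENT 4: For K_j = Y^{-1/2}·[−(X+iY), Iₙ]·Pₙ·E_j (the coupling matrix of the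
j-th oscillator in the cascade construction), Im(K_j† K_k) = 0 for all j ≠ k.
Here E_j is the 2n×2 matrix whose rows are zero except rows 2j−1, 2j (1-based;
0-based: rows 2j, 2j+1), which form the 2×2 identity, and Pₙ is the permutation
matrix with Pₙ(a₁,…,a_{2n})ᵀ = (a₁, a₃, …, a_{2n−1}, a₂, a₄, …, a_{2n})ᵀ.
The rows of Pₙ are indexed by `Fin n ⊕ Fin n` (the quadrature ordering
q₁,…,qₙ,p₁,…,pₙ) and its columns by `Fin (2*n)` (the interleaved ordering).
-/

open Matrix
open scoped MatrixOrder

noncomputable section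

/-- The matrix [−(X+iY), Iₙ] pre-multiplied by Y^{-1/2}, where Y^{-1/2} is the inverse
of the positive-definite square root of Y. -/
def couplingK {n : ℕ} (X Y : Matrix (Fin n) (Fin n) ℝ) (hY : Y.PosDef) :
    Matrix (Fin n) (Fin n ⊕ Fin n) ℂ :=
  ((CFC.sqrt Y)⁻¹).map Complex.ofReal *
    Matrix.fromCols (-(X.map Complex.ofReal + Complex.I • Y.map Complex.ofReal)) 1

/-- The permutation matrix Pₙ sending the interleaved vector (q₁,p₁,…,qₙ,pₙ)
(columns, indexed by `Fin (2*n)`) to the quadrature ordering (q₁,…,qₙ,p₁,…,pₙ)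
(rows, indexed by `Fin n ⊕ Fin n`): row `inl k` picks entry 2k (0-based),
row `inr k` picks entry 2k+1 (0-based). -/
def permP (n : ℕ) : Matrix (Fin n ⊕ Fin n) (Fin (2*n)) ℝ :=
  Matrix.of fun i j =>
    match i with
    | Sum.inl k => if (j : ℕ) = 2 * (k : ℕ) then 1 else 0
    | Sum.inr k => if (j : ℕ) = 2 * (k : ℕ) + 1 then 1 else 0

/-- The 2n×2 selection matrix E_j: all rows zero except rows 2j, 2j+1 (0-based),
which form the 2×2 identity. -/
def selE (n : ℕ) (j : Fin n) : Matrix (Fin (2*n)) (Fin 2) ℝ :=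
  Matrix.of fun i s => if (i : ℕ) = 2 * (j : ℕ) + (s : ℕ) then 1 else 0

/-- The n×2 coupling matrix K_j = Y^{-1/2}·[−(X+iY), Iₙ]·Pₙ·E_j of the j-th oscillator. -/
def oscK {n : ℕ} (X Y : Matrix (Fin n) (Fin n) ℝ) (hY : Y.PosDef) (j : Fin n) :
    Matrix (Fin n) (Fin 2) ℂ :=
  couplingK X Y hY * (permP n).map Complex.ofReal * (selE n j).map Complex.ofReal


/-!
With A = Y^{-1/2}, the matrix K = A[−(X+iY), Iₙ] has real part A[−X, Iₙ] and imaginary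
part A[−Y, 0]. Since Im(U†V) = (Re U)ᵀ Im V − (Im U)ᵀ Re V, AᵀA = Y⁻¹ and X, Y are
symmetric, Im(K†K) = Σ (which is `-J` in Mathlib's notation). As Pₙ E_j is real,
Im(K_j†K_k) = (Pₙ E_j)ᵀ Σ (Pₙ E_k), and the columns of Pₙ E_j are the basis vectors of q_j
and p_j, which Σ pairs only with p_j and q_j.
-/

namespace Matrix

variable {l m n : Type*} [Fintype m]

theorem map_im_conjTranspose_mul (U : Matrix m l ℂ) (V : Matrix m n ℂ) :
    (Uᴴ * V).map Complex.im =
      (U.map Complex.re)ᵀ * V.map Complex.im - (U.map Complex.im)ᵀ * V.map Complex.re := by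
  ext i k
  simp [mul_apply, Complex.im_sum, sub_eq_add_neg, Finset.sum_add_distrib]

theorem map_re_map_ofReal_mul (R : Matrix l m ℝ) (W : Matrix m n ℂ) :
    (R.map Complex.ofReal * W).map Complex.re = R * W.map Complex.re := by
  ext i k
  simp [mul_apply, Complex.re_sum]

theorem map_im_map_ofReal_mul (R : Matrix l m ℝ) (W : Matrix m n ℂ) :
    (R.map Complex.ofReal * W).map Complex.im = R * W.map Complex.im := by
  ext i k
  simp [mul_apply, Complex.im_sum]

theorem map_re_mul_map_ofReal (W : Matrix l m ℂ) (R : Matrix m n ℝ) :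
    (W * R.map Complex.ofReal).map Complex.re = W.map Complex.re * R := by
  ext i k
  simp [mul_apply, Complex.re_sum]

theorem map_im_mul_map_ofReal (W : Matrix l m ℂ) (R : Matrix m n ℝ) :
    (W * R.map Complex.ofReal).map Complex.im = W.map Complex.im * R := by
  ext i k
  simp [mul_apply, Complex.im_sum]

theorem map_im_conjTranspose_mul_map_ofReal {p q : Type*} [Fintype l] [Fintype n]
    (U : Matrix m l ℂ) (V : Matrix m n ℂ) (R : Matrix l p ℝ) (S : Matrix n q ℝ) :
    ((U * R.map Complex.ofReal)ᴴ * (V * S.map Complex.ofReal)).map Complex.im =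
      Rᵀ * (Uᴴ * V).map Complex.im * S := by
  simp only [map_im_conjTranspose_mul, map_re_mul_map_ofReal, map_im_mul_map_ofReal,
    transpose_mul, Matrix.mul_sub, Matrix.sub_mul, Matrix.mul_assoc]

open scoped ComplexOrder in
theorem conjTranspose_sqrt_inv_mul_sqrt_inv {𝕜 : Type*} [RCLike 𝕜] [DecidableEq n] [Fintype n]
    {Y : Matrix n n 𝕜} (hY : Y.PosSemidef) :
    ((CFC.sqrt Y)⁻¹)ᴴ * (CFC.sqrt Y)⁻¹ = Y⁻¹ := by
  rw [conjTranspose_nonsing_inv, ← star_eq_conjTranspose,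
    (CFC.sqrt_nonneg Y).isSelfAdjoint.star_eq, ← mul_inv_rev, CFC.sqrt_mul_sqrt_self Y hY.nonneg]

end Matrix

section Coupling

variable {n : ℕ} {X Y : Matrix (Fin n) (Fin n) ℝ} (hY : Y.PosDef)

theorem map_re_couplingK :
    (couplingK X Y hY).map Complex.re = (CFC.sqrt Y)⁻¹ * fromCols (-X) 1 := by
  rw [couplingK, map_re_map_ofReal_mul]
  congr 1
  ext i (j | j) <;> simp [one_apply, apply_ite]

theorem map_im_couplingK :
    (couplingK X Y hY).map Complex.im = (CFC.sqrt Y)⁻¹ * fromCols (-Y) 0 := by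
  rw [couplingK, map_im_map_ofReal_mul]
  congr 1
  ext i (j | j) <;> simp [one_apply, apply_ite]

theorem map_im_conjTranspose_couplingK_mul_self (hX : X.IsSymm) :
    ((couplingK X Y hY)ᴴ * couplingK X Y hY).map Complex.im = -J (Fin n) ℝ := by
  have hYt : Yᵀ = Y := hY.isHermitian
  have hYdet : IsUnit Y.det := (isUnit_iff_isUnit_det Y).mp hY.isUnit
  have hAA : ((CFC.sqrt Y)⁻¹)ᵀ * (CFC.sqrt Y)⁻¹ = Y⁻¹ := by
    simpa [conjTranspose_eq_transpose_of_trivial] using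
      conjTranspose_sqrt_inv_mul_sqrt_inv hY.posSemidef
  have gram (F G : Matrix (Fin n) (Fin n ⊕ Fin n) ℝ) :
      ((CFC.sqrt Y)⁻¹ * F)ᵀ * ((CFC.sqrt Y)⁻¹ * G) = Fᵀ * Y⁻¹ * G := by
    rw [transpose_mul, Matrix.mul_assoc, ← Matrix.mul_assoc _ (CFC.sqrt Y)⁻¹, hAA,
      Matrix.mul_assoc]
  rw [map_im_conjTranspose_mul, map_re_couplingK, map_im_couplingK, gram, gram]
  simp [transpose_fromCols, fromRows_mul, hX.eq, hYt, J, nonsing_inv_mul _ hYdet,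
    mul_nonsing_inv _ hYdet, nonsing_inv_mul_cancel_right _ _ hYdet]
  ext (i | i) (j | j) <;> simp

end Coupling

theorem permP_mul_selE {n : ℕ} (j : Fin n) :
    permP n * selE n j = fromRows (single j 0 1) (single j 1 1) := by
  ext (a | a) s
  · rw [mul_apply, Finset.sum_eq_single ⟨2 * a, by omega⟩
      (by simp +contextual [permP, Fin.ext_iff]) (by simp)]
    simp only [permP, selE, single, of_apply, fromRows_apply_inl, if_true, one_mul, Fin.ext_iff]
    congr 1
    exact propext (by omega)
  · rw [mul_apply, Finset.sum_eq_single ⟨2 * a + 1, by omega⟩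
      (by simp +contextual [permP, Fin.ext_iff]) (by simp)]
    simp only [permP, selE, single, of_apply, fromRows_apply_inr, if_true, one_mul, Fin.ext_iff]
    congr 1
    exact propext (by omega)

theorem transpose_fromRows_single_mul_J_mul_fromRows_single_of_ne {l R : Type*} [Fintype l]
    [DecidableEq l] [CommRing R] {j k : l} (hjk : j ≠ k) :
    (fromRows (single j 0 1) (single j 1 1) : Matrix (l ⊕ l) (Fin 2) R)ᵀ * J l R *
      (fromRows (single k 0 1) (single k 1 1) : Matrix (l ⊕ l) (Fin 2) R) = 0 := by
  simp [J, transpose_fromRows, fromCols_mul_fromBlocks, fromCols_mul_fromRows, hjk]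

theorem oscK_eq_couplingK_mul {n : ℕ} {X Y : Matrix (Fin n) (Fin n) ℝ} (hY : Y.PosDef)
    (j : Fin n) :
    oscK X Y hY j = couplingK X Y hY * (permP n * selE n j).map Complex.ofReal := by
  rw [oscK, Matrix.mul_assoc]
  congr 1
  exact (Matrix.map_mul (f := Complex.ofRealHom)).symm

theorem im_oscK_dag_oscK_eq_zero_of_ne_general
    (n : ℕ) (X Y : Matrix (Fin n) (Fin n) ℝ)
    (hX : X.IsSymm) (hY : Y.PosDef)
    (j k : Fin n) (hjk : j ≠ k) :
    ((oscK X Y hY j)ᴴ * oscK X Y hY k).map Complex.im = 0 := by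
  rw [oscK_eq_couplingK_mul, oscK_eq_couplingK_mul, map_im_conjTranspose_mul_map_ofReal,
    map_im_conjTranspose_couplingK_mul_self hY hX, permP_mul_selE, permP_mul_selE,
    Matrix.mul_neg, Matrix.neg_mul,
    transpose_fromRows_single_mul_J_mul_fromRows_single_of_ne hjk, neg_zero]

theorem im_oscK_dag_oscK_eq_zero_of_ne
    (n : ℕ) (hn : 0 < n) (X Y : Matrix (Fin n) (Fin n) ℝ)
    (hX : X.IsSymm) (hYs : Y.IsSymm) (hY : Y.PosDef)
    (j k : Fin n) (hjk : j ≠ k) :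
    ((oscK X Y hY j)ᴴ * oscK X Y hY k).map Complex.im = 0 :=
  im_oscK_dag_oscK_eq_zero_of_ne_general n X Y hX hY j k hjk
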